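/- arXiv:0911.1620 — 2 statements merged into one kernel-verified Lean document; each statement's English description precedes it below -/
import Mathlib

section
/- Let E be a module over a commutative ring A, H a hyperplane of E (E/H free of rank 1), and φ an A-endomorphism of E fixing H pointwise such that the induced endomorphism of E/H is multiplication by a scalar a with a - 1 invertible. Then there exists a unique line submodule L of E such that E = H ⊕ L and φ(L) ⊆ L. -/
/-!
The line is the `a`-eigenspace `K` of `φ`. It meets `H` trivially because `φ - a` acts on `H`
as the unit `1 - a`, and `(a - 1)⁻¹ (φ - 1)` projects `E` onto `K` along `H`; so `K` is a
complement of `H`, hence isomorphic to `E ⧸ H`. Conversely, if `L` is `φ`-stable and meets `H`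
trivially, then `φ x - a x ∈ H ∩ L = 0` for `x ∈ L`, so `L ≤ K`, and a complement of `H` contained
in a submodule disjoint from `H` is equal to it.
-/

open Module.End

namespace Module.End

variable {A E : Type*} [CommRing A] [AddCommGroup E] [Module A E]
  {H : Submodule A E} {φ : E →ₗ[A] E} {a : A}

theorem disjoint_eigenspace_of_fixes (hφH : ∀ s ∈ H, φ s = s) (ha : IsUnit (a - 1)) :
    Disjoint H (eigenspace φ a) := by
  refine Submodule.disjoint_def.mpr fun x hxH hxK => ?_
  have hfix : (a - 1) • x = 0 := by
    rw [sub_smul, one_smul, ← mem_eigenspace_iff.mp hxK, hφH x hxH, sub_self]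
  exact ha.smul_eq_zero.mp hfix

theorem codisjoint_eigenspace (hφH : ∀ s ∈ H, φ s = s) (hφE : ∀ x, φ x - a • x ∈ H)
    (ha : IsUnit (a - 1)) : Codisjoint H (eigenspace φ a) := by
  obtain ⟨u, hu⟩ := ha
  have hu' : (↑u⁻¹ : A) * (a - 1) = 1 := by rw [← hu, Units.inv_mul]
  refine codisjoint_iff_le_sup.mpr fun x _ => ?_
  -- `y` is the image of `x` under the projection `(a - 1)⁻¹ (φ - 1)` onto the eigenspace along `H`
  set y := (↑u⁻¹ : A) • (φ x - x)
  have hy : y ∈ eigenspace φ a := by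
    have hφ := hφH _ (hφE x)
    rw [map_sub, map_smul] at hφ
    rw [mem_eigenspace_iff, map_smul, map_sub]
    linear_combination (norm := module) (↑u⁻¹ : A) • hφ
  have hxy : x - y = -((↑u⁻¹ : A) • (φ x - a • x)) := by
    linear_combination (norm := module) -(hu' • x)
  rw [← sub_add_cancel x y]
  exact Submodule.add_mem_sup (hxy ▸ H.neg_mem (H.smul_mem _ (hφE x))) hy

theorem isCompl_eigenspace (hφH : ∀ s ∈ H, φ s = s) (hφE : ∀ x, φ x - a • x ∈ H)
    (ha : IsUnit (a - 1)) : IsCompl H (eigenspace φ a) :=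
  ⟨disjoint_eigenspace_of_fixes hφH ha, codisjoint_eigenspace hφH hφE ha⟩

theorem le_eigenspace_of_disjoint (hφE : ∀ x, φ x - a • x ∈ H) {L : Submodule A E}
    (hL : Disjoint H L) (hφL : L.map φ ≤ L) : L ≤ eigenspace φ a := fun x hx =>
  have hφx : φ x ∈ L := hφL (Submodule.mem_map_of_mem hx)
  mem_eigenspace_iff.mpr <| sub_eq_zero.mp <|
    Submodule.disjoint_def.mp hL _ (hφE x) (L.sub_mem hφx (L.smul_mem a hx))

theorem map_eigenspace_le (φ : E →ₗ[A] E) (a : A) :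
    (eigenspace φ a).map φ ≤ eigenspace φ a := by
  rintro _ ⟨x, hx, rfl⟩
  rw [SetLike.mem_coe, mem_eigenspace_iff] at hx
  rw [mem_eigenspace_iff, hx, map_smul, hx]

end Module.End

theorem stmt_3 (A : Type*) [CommRing A] (E : Type*) [AddCommGroup E] [Module A E]
    (H : Submodule A E) (hfree : Module.Free A (E ⧸ H))
    (hrank : Module.rank A (E ⧸ H) = 1)
    (φ : E →ₗ[A] E) (hφH : ∀ s ∈ H, φ s = s)
    (a : A)
    (hhom : ∀ x : E, (Submodule.Quotient.mk (φ x) : E ⧸ H) =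
      a • (Submodule.Quotient.mk x : E ⧸ H))
    (ha : IsUnit (a - 1)) :
    ∃! L : Submodule A E,
      (Module.Free A L ∧ Module.rank A L = 1) ∧ IsCompl H L ∧ L.map φ ≤ L := by
  have hφE : ∀ x, φ x - a • x ∈ H := fun x =>
    (Submodule.Quotient.eq H).mp ((hhom x).trans (Submodule.Quotient.mk_smul H a x).symm)
  have hK := isCompl_eigenspace hφH hφE ha
  let e := Submodule.quotientEquivOfIsCompl H _ hK
  refine ⟨eigenspace φ a, ⟨⟨.of_equiv e, e.rank_eq ▸ hrank⟩, hK, map_eigenspace_le φ a⟩, ?_⟩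
  rintro L ⟨-, hL, hφL⟩
  exact (le_iff_eq_of_codisjoint_of_disjoint hL.codisjoint.symm hK.disjoint).mp
    (le_eigenspace_of_disjoint hφE hL.disjoint hφL)
end

section
/- (Witt's theorem for symplectic modules) Let E be a free module of rank 2n over a field A, equipped with two symplectic forms ω₀ and ω₁, and let F be a submodule of E that is Lagrangian with respect to both ω₀ and ω₁. Then there exists an A-linear isomorphism φ : E → E with ω₁(φ(x), φ(y)) = ω₀(x, y) for all x, y ∈ E and φ|_F = id_F. -/
/-!
Relative to a Lagrangian `F`, every symplectic form is isometric to the standard form on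
`Dual F × F` through an isomorphism that is the identity on `F`. To build it, lift `Dual F` to
`E` linearly through the form, then correct the lift by a map `Dual F → F` so that its image
becomes isotropic; this is possible because the alternating defect form on `Dual F` can be
written as `γ - γᵀ`. Composing the normal forms of `ω₀` and `ω₁` gives `φ`.
-/

open Module

namespace LinearMap

theorem IsAlt.exists_eq_sub_flip {R M N : Type*} [CommRing R] [AddCommGroup M] [Module R M]
    [Module.Free R M] [AddCommGroup N] [Module R N] {B : M →ₗ[R] M →ₗ[R] N} (hB : B.IsAlt) :
    ∃ γ : M →ₗ[R] M →ₗ[R] N, B = γ - γ.flip := by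
  classical
  let b := Module.Free.chooseBasis R M
  let : LinearOrder (Module.Free.ChooseBasisIndex R M) := linearOrderOfSTO WellOrderingRel
  -- the strictly upper triangular part of the Gram matrix of `B`
  refine ⟨b.constr R fun i ↦ b.constr R fun j ↦ if i < j then B (b i) (b j) else 0, ?_⟩
  refine ext_basis b b fun i j ↦ ?_
  simp only [sub_apply, flip_apply, Basis.constr_basis]
  rcases lt_trichotomy i j with h | rfl | h
  · simp [h, h.not_gt]
  · simp [hB.self_eq_zero]
  · simp [h, h.not_gt, ← hB.neg (b i)]

variable (R M : Type*) [CommRing R] [AddCommGroup M] [Module R M]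

def symplecticDualProd : LinearMap.BilinForm R (Dual R M × M) :=
  LinearMap.id.compl₁₂ (fst R (Dual R M) M) (snd R (Dual R M) M) -
    (LinearMap.id.compl₁₂ (fst R (Dual R M) M) (snd R (Dual R M) M)).flip

variable {R M}

@[simp]
theorem symplecticDualProd_apply (p q : Dual R M × M) :
    symplecticDualProd R M p q = p.1 q.2 - q.1 p.2 :=
  rfl

theorem separatingLeft_symplecticDualProd [Module.Projective R M] :
    (symplecticDualProd R M).SeparatingLeft := by
  rintro ⟨f, x⟩ h
  have hf : f = 0 := LinearMap.ext fun y ↦ by simpa using h (0, y)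
  have hx : x = 0 := (forall_dual_apply_eq_zero_iff R x).mp fun g ↦ by simpa using h (g, 0)
  simp [hf, hx]

end LinearMap

namespace LinearMap.BilinForm

variable {K V : Type*} [Field K] [AddCommGroup V] [Module K V] [FiniteDimensional K V]
  {B : LinearMap.BilinForm K V} {F : Submodule K V}

theorem finrank_add_finrank_of_orthogonal_eq_self (hB : B.Nondegenerate)
    (hF : B.orthogonal F = F) : finrank K F + finrank K F = finrank K V := by
  have h := finrank_orthogonal hB F
  rw [hF] at h
  have := F.finrank_le
  omega

theorem exists_dual_lift (hB : B.Nondegenerate) (F : Submodule K V) :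
    ∃ j : Dual K F →ₗ[K] V, ∀ (α : Dual K F) (x : F), B (j α) x = α x := by
  have hsurj : range (F.subtype.dualMap ∘ₗ (B.toDual hB).toLinearMap) = ⊤ :=
    range_eq_top.mpr <| (dualMap_surjective_of_injective F.injective_subtype).comp
      (B.toDual hB).surjective
  obtain ⟨j, hj⟩ := exists_rightInverse_of_surjective _ hsurj
  exact ⟨j, fun α x ↦ congr($hj α x)⟩

theorem exists_isotropic_dual_lift (hB : B.Nondegenerate) (hBalt : B.IsAlt)
    (hF : F ≤ B.orthogonal F) :
    ∃ j : Dual K F →ₗ[K] V,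
      (∀ (α : Dual K F) (x : F), B (j α) x = α x) ∧ ∀ α β, B (j α) (j β) = 0 := by
  obtain ⟨j₀, hj₀⟩ := exists_dual_lift hB F
  obtain ⟨γ, hγ⟩ :=
    IsAlt.exists_eq_sub_flip (B := B.compl₁₂ j₀ j₀) fun α ↦ hBalt.self_eq_zero (j₀ α)
  -- subtracting `s` from `j₀` cancels `B (j₀ α) (j₀ β) = γ α β - γ β α`
  let s : Dual K F →ₗ[K] F := (evalEquiv K F).symm.toLinearMap ∘ₗ γ.flip
  have hs : ∀ α β, α (s β) = γ α β := fun α β ↦ apply_evalEquiv_symm_apply K F α (γ.flip β)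
  have hFF : ∀ x y : F, B x y = 0 := fun x y ↦ hF y.2 x x.2
  refine ⟨j₀ - F.subtype ∘ₗ s, fun α x ↦ ?_, fun α β ↦ ?_⟩
  · simp [hj₀, hFF]
  · have hj₀j₀ : B (j₀ α) (j₀ β) = γ α β - γ β α := congr($hγ α β)
    have hsj₀ : B (s α) (j₀ β) = -β (s α) := by rw [← hBalt.neg_eq, hj₀]
    simp only [LinearMap.sub_apply, map_sub, LinearMap.comp_apply, Submodule.coe_subtype,
      hj₀, hsj₀, hFF, hj₀j₀, hs]
    ring

theorem exists_linearEquiv_symplecticDualProd (hB : B.Nondegenerate) (hBalt : B.IsAlt)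
    (hF : B.orthogonal F = F) :
    ∃ Φ : (Dual K F × F) ≃ₗ[K] V,
      (∀ x : F, Φ (0, x) = x) ∧ ∀ p q, B (Φ p) (Φ q) = symplecticDualProd K F p q := by
  obtain ⟨j, hjF, hjj⟩ := exists_isotropic_dual_lift hB hBalt hF.ge
  have hFF : ∀ x y : F, B x y = 0 := fun x y ↦ hF.ge y.2 x x.2
  let Φ := j.coprod F.subtype
  have hΦ : ∀ p q, B (Φ p) (Φ q) = symplecticDualProd K F p q := by
    rintro ⟨α, x⟩ ⟨β, y⟩
    have hxj : B x (j β) = -β x := by rw [← hBalt.neg_eq, hjF]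
    simp only [Φ, coprod_apply, Submodule.subtype_apply, map_add, LinearMap.add_apply, hjj, hjF,
      hxj, hFF, symplecticDualProd_apply]
    ring
  have hinj : Function.Injective Φ := by
    refine (injective_iff_map_eq_zero Φ).mpr fun p hp ↦
      separatingLeft_symplecticDualProd p fun q ↦ ?_
    simp [← hΦ, hp]
  have hdim : finrank K (Dual K F × F) = finrank K V := by
    rw [finrank_prod, Subspace.dual_finrank_eq, finrank_add_finrank_of_orthogonal_eq_self hB hF]
  exact ⟨linearEquivOfInjective Φ hinj hdim, fun x ↦ by simp [Φ], hΦ⟩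

end LinearMap.BilinForm

theorem stmt_12_general (A : Type*) [Field A] (E : Type*) [AddCommGroup E] [Module A E]
    [FiniteDimensional A E]
    (ω₀ ω₁ : E →ₗ[A] E →ₗ[A] A)
    (halt₀ : ∀ s : E, ω₀ s s = 0) (hnd₀ : ∀ s : E, (∀ t : E, ω₀ s t = 0) → s = 0)
    (halt₁ : ∀ s : E, ω₁ s s = 0) (hnd₁ : ∀ s : E, (∀ t : E, ω₁ s t = 0) → s = 0)
    (F : Submodule A E)
    (hLag₀ : ∀ x : E, x ∈ F ↔ ∀ y ∈ F, ω₀ y x = 0)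
    (hLag₁ : ∀ x : E, x ∈ F ↔ ∀ y ∈ F, ω₁ y x = 0) :
    ∃ φ : E ≃ₗ[A] E, (∀ x y : E, ω₁ (φ x) (φ y) = ω₀ x y) ∧ ∀ x ∈ F, φ x = x := by
  obtain ⟨Φ₀, hΦ₀F, hΦ₀⟩ := LinearMap.BilinForm.exists_linearEquiv_symplecticDualProd
    (.ofSeparatingLeft hnd₀) halt₀ (Submodule.ext fun x ↦ (hLag₀ x).symm)
  obtain ⟨Φ₁, hΦ₁F, hΦ₁⟩ := LinearMap.BilinForm.exists_linearEquiv_symplecticDualProd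
    (.ofSeparatingLeft hnd₁) halt₁ (Submodule.ext fun x ↦ (hLag₁ x).symm)
  refine ⟨Φ₀.symm.trans Φ₁, fun x y ↦ ?_, fun x hx ↦ ?_⟩
  · simp [hΦ₁, ← hΦ₀]
  · have hx₀ : Φ₀.symm x = (0, ⟨x, hx⟩) := Φ₀.symm_apply_eq.mpr (hΦ₀F ⟨x, hx⟩).symm
    simp [hx₀, hΦ₁F]

theorem stmt_12 (A : Type*) [Field A] (E : Type*) [AddCommGroup E] [Module A E]
    [FiniteDimensional A E] (n : ℕ) (hdim : Module.finrank A E = 2 * n)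
    (ω₀ ω₁ : E →ₗ[A] E →ₗ[A] A)
    (halt₀ : ∀ s : E, ω₀ s s = 0) (hnd₀ : ∀ s : E, (∀ t : E, ω₀ s t = 0) → s = 0)
    (halt₁ : ∀ s : E, ω₁ s s = 0) (hnd₁ : ∀ s : E, (∀ t : E, ω₁ s t = 0) → s = 0)
    (F : Submodule A E)
    (hLag₀ : ∀ x : E, x ∈ F ↔ ∀ y ∈ F, ω₀ y x = 0)
    (hLag₁ : ∀ x : E, x ∈ F ↔ ∀ y ∈ F, ω₁ y x = 0) :
    ∃ φ : E ≃ₗ[A] E, (∀ x y : E, ω₁ (φ x) (φ y) = ω₀ x y) ∧ ∀ x ∈ F, φ x = x :=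
  stmt_12_general A E ω₀ ω₁ halt₀ hnd₀ halt₁ hnd₁ F hLag₀ hLag₁
end
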